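/- arXiv:2403.17596 — 3 statements merged into one kernel-verified Lean document; each statement's English description precedes it below -/
import Mathlib

section
/- Let α > 0 and ν > 0 be real numbers. (a) For every i ∈ ℕ* with i ≤ ⌈ν/α⌉ − 1 and every ĵ ∈ {1,…,i}, one has ĵ·(ν + ⌈i − (1+α)(i−1)⌉) + (i − ĵ)·(α+1) ≥ ν + i. (b) Moreover ⌈ν/α⌉·(α+1) ≥ ν + ⌈ν/α⌉. -/
/-- Let `α > 0` and `ν > 0` be real numbers.
(a) For every `i ∈ ℕ*` with `i ≤ ⌈ν/α⌉ − 1` and every `ĵ ∈ {1,…,i}`, one has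
`ĵ·(ν + ⌈i − (1+α)(i−1)⌉) + (i − ĵ)·(α+1) ≥ ν + i`.
(b) Moreover `⌈ν/α⌉·(α+1) ≥ ν + ⌈ν/α⌉`. -/
theorem stmt2 (α ν : ℝ) (hα : 0 < α) (hν : 0 < ν) :
    (∀ i : ℕ, 1 ≤ i → (i : ℤ) ≤ ⌈ν / α⌉ - 1 →
      ∀ j : ℕ, 1 ≤ j → j ≤ i →
        ν + (i : ℝ) ≤
          (j : ℝ) * (ν + (⌈(i : ℝ) - (1 + α) * ((i : ℝ) - 1)⌉ : ℤ))
            + ((i : ℝ) - (j : ℝ)) * (α + 1)) ∧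
    ν + ((⌈ν / α⌉ : ℤ) : ℝ) ≤ ((⌈ν / α⌉ : ℤ) : ℝ) * (α + 1) := by
  constructor
  · intro i hi1 hi j hj1 hji
    set c : ℝ := ((⌈(i : ℝ) - (1 + α) * ((i : ℝ) - 1)⌉ : ℤ) : ℝ) with hc
    have hceil : (i : ℝ) - (1 + α) * ((i : ℝ) - 1) ≤ c := Int.le_ceil _
    have hi1' : (1 : ℝ) ≤ (i : ℝ) := by exact_mod_cast hi1
    have hj1' : (1 : ℝ) ≤ (j : ℝ) := by exact_mod_cast hj1
    have hji' : (j : ℝ) ≤ (i : ℝ) := by exact_mod_cast hji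
    -- from i ≤ ⌈ν/α⌉ - 1 we get i < ν/α, hence α*i < ν
    have h1 : (i : ℝ) ≤ ((⌈ν / α⌉ : ℤ) : ℝ) - 1 := by exact_mod_cast hi
    have h2 : ((⌈ν / α⌉ : ℤ) : ℝ) - 1 < ν / α := by
      have := Int.ceil_lt_add_one (ν / α)
      linarith
    have h3 : (i : ℝ) < ν / α := lt_of_le_of_lt h1 h2
    have hνi : α * (i : ℝ) < ν := by
      have := (lt_div_iff₀ hα).mp h3
      linarith [this]
    -- ν + c ≥ α + 1
    have hkey : α + 1 ≤ ν + c := by nlinarith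
    have hprod : 0 ≤ ((j : ℝ) - 1) * (ν + c - (α + 1)) :=
      mul_nonneg (by linarith) (by linarith)
    nlinarith [hprod, hceil]
  · have h := Int.le_ceil (ν / α)
    have h' : ν ≤ ((⌈ν / α⌉ : ℤ) : ℝ) * α := (div_le_iff₀ hα).mp h
    nlinarith [h']
end

section
/- Let δ > 0, S = Nδ with N ∈ ℕ*, let t ∈ π^δ, and let (P_{s,u})_{s≤u} and (Q_{s,u})_{s≤u ∈ π^δ} be families of linear operators on bounded measurable functions each satisfying the Chapman–Kolmogorov property, with P_{u,u} = Q_{u,u} = Id. Then for every m ∈ ℕ* the exact decomposition holds: P_{t,t+S} = Q_{t,t+S} + Σ_{i=1}^{m−1} I_i + R_m, where I_i = Σ over grid times t = t₀ < t₁ < ⋯ < t_i ≤ t+S in π^δ of (∏_{j=1}^{i} Q_{t_{j−1},t_j−δ}(P_{t_j−δ,t_j} − Q_{t_j−δ,t_j})) Q_{t_i,t+S}, and R_m = Σ over grid times t = t₀ < t₁ < ⋯ < t_m ≤ t+S in π^δ of (∏_{j=1}^{m} Q_{t_{j−1},t_j−δ}(P_{t_j−δ,t_j} − Q_{t_j−δ,t_j}))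 P_{t_m,t+S}. -/
open MeasureTheory

noncomputable section

abbrev Rd (d : ℕ) := Fin d → ℝ
abbrev Fn (d : ℕ) := Rd d → ℝ
abbrev Op (d : ℕ) := Module.End ℝ (Fn d)

def inGrid (δ t : ℝ) : Prop := ∃ k : ℕ, t = k * δ

open Classical in
/-- Strictly increasing selections `1 ≤ k₁ < ⋯ < k_i ≤ N` of grid indices. -/
noncomputable def gridSeq (i N : ℕ) : Finset (Fin i → Fin (N + 1)) :=
  Finset.univ.filter (fun k => StrictMono k ∧ ∀ j, 1 ≤ (k j : ℕ))

/-- times `t = t₀ < t₁ < ⋯ < t_i`, with `t_j = t + k_j δ`. -/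
def seqTimes {i N : ℕ} (k : Fin i → Fin (N + 1)) (t δ : ℝ) : Fin (i + 1) → ℝ :=
  fun j => Fin.cases t (fun j' => t + ((k j' : ℕ) : ℝ) * δ) j

/-- `Σ over t = t₀ < t₁ < ⋯ < t_i ≤ t + Nδ in π^δ of
(∏_{j=1}^{i} Q_{t_{j−1},t_j−δ} D_{t_j−δ}) tail_{t_i}`, where products are operator
compositions ordered along increasing times (the `j = 1` factor acting last). -/
noncomputable def lindSum (d : ℕ) (Q : ℝ → ℝ → Op d) (D : ℝ → Op d) (tail : ℝ → Op d)
    (t δ : ℝ) (i N : ℕ) : Op d :=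
  ∑ k ∈ gridSeq i N,
    (List.ofFn (fun j : Fin i =>
      Q (seqTimes k t δ j.castSucc) (seqTimes k t δ j.succ - δ) *
        D (seqTimes k t δ j.succ - δ))).prod *
      tail (seqTimes k t δ (Fin.last i))

/-! Along the grid, `c ↦ Q_{s,t+cδ} P_{t+cδ,t+S}` telescopes from `P_{s,t+S}` to `Q_{s,t+S}`, with
increments `Q_{s,u-δ}(P_{u-δ,u} - Q_{u-δ,u})P_{u,t+S}`. Substituting this one-step identity for the
tail `P_{t_i,t+S}` of each term of `R_i` splits `R_i = I_i + R_{i+1}` (where `R_0 = P_{t,t+S}` and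
`I_0 = Q_{t,t+S}`), and the decomposition follows by induction on `m`. -/

open Finset

theorem Fin.strictMono_snoc {α : Type*} [Preorder α] {n : ℕ} {f : Fin (n + 1) → α} {a : α} :
    StrictMono (Fin.snoc f a : Fin (n + 2) → α) ↔ StrictMono f ∧ f (Fin.last n) < a := by
  rw [Fin.strictMono_iff_lt_succ, Fin.forall_fin_succ', Fin.strictMono_iff_lt_succ]
  simp only [Fin.succ_castSucc, Fin.snoc_castSucc, Fin.succ_last, Fin.snoc_last]

theorem sum_Ico_eq_sum_Ioi_fin {M : Type*} [AddCommMonoid M] {N : ℕ} {f : Fin (N + 1) → M}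
    {g : ℕ → M} (a : Fin (N + 1)) (h : ∀ c (hc : c < N), g c = f ⟨c + 1, by omega⟩) :
    ∑ c ∈ Ico (a : ℕ) N, g c = ∑ c ∈ Ioi a, f c := by
  refine sum_bij' (fun c hc => ⟨c + 1, by rw [mem_Ico] at hc; omega⟩) (fun c _ => (c : ℕ) - 1)
    ?_ ?_ ?_ ?_ fun c hc => h c (mem_Ico.mp hc).2
  all_goals
    intro c hc
    simp only [mem_Ico, mem_Ioi, Fin.lt_def, Fin.ext_iff] at hc ⊢
    omega

theorem eq_add_sum_Icc_add_of_eq_add_succ {M : Type*} [AddCommMonoid M] {f g : ℕ → M}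
    (h : ∀ i, f i = g i + f (i + 1)) (n : ℕ) :
    f 0 = g 0 + ∑ i ∈ Icc 1 n, g i + f (n + 1) := by
  induction n with
  | zero => simpa using h 0
  | succ n ih =>
    rw [ih, h (n + 1), sum_Icc_succ_top (by omega)]
    abel

theorem lindeberg_telescope {R : Type*} [Ring R] {p q : ℕ → ℕ → R}
    (hp : ∀ a b c, a ≤ b → b ≤ c → p a b * p b c = p a c)
    (hq : ∀ a b c, a ≤ b → b ≤ c → q a b * q b c = q a c)
    (hp₁ : ∀ a, p a a = 1) (hq₁ : ∀ a, q a a = 1) {a N : ℕ} (ha : a ≤ N) :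
    p a N = q a N + ∑ c ∈ Ico a N, q a c * (p c (c + 1) - q c (c + 1)) * p (c + 1) N := by
  have term : ∀ c ∈ Ico a N, q a c * (p c (c + 1) - q c (c + 1)) * p (c + 1) N =
      -(q a (c + 1) * p (c + 1) N - q a c * p c N) := by
    intro c hc
    obtain ⟨hac, hcN⟩ := mem_Ico.mp hc
    rw [mul_sub, sub_mul, mul_assoc, hp c (c + 1) N (by omega) (by omega),
      hq a c (c + 1) hac (by omega)]
    abel
  rw [sum_congr rfl term, sum_neg_distrib, sum_Ico_sub (fun c => q a c * p c N) ha, hp₁, hq₁]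
  simp

theorem inGrid.add_nat_mul {δ t : ℝ} (ht : inGrid δ t) (n : ℕ) : inGrid δ (t + n * δ) := by
  obtain ⟨k, rfl⟩ := ht
  exact ⟨k + n, by push_cast; ring⟩

theorem lindeberg_step_grid {R : Type*} [Ring R] {δ t : ℝ} (hδ : 0 ≤ δ) (ht : inGrid δ t)
    {P Q : ℝ → ℝ → R}
    (hPCK : ∀ s u v : ℝ, s ≤ u → u ≤ v → P s u * P u v = P s v)
    (hQCK : ∀ s u v : ℝ, inGrid δ s → inGrid δ u → inGrid δ v →
      s ≤ u → u ≤ v → Q s u * Q u v = Q s v)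
    (hPid : ∀ u : ℝ, P u u = 1) (hQid : ∀ u : ℝ, inGrid δ u → Q u u = 1)
    (N : ℕ) (a : Fin (N + 1)) :
    P (t + (a : ℕ) * δ) (t + N * δ) = Q (t + (a : ℕ) * δ) (t + N * δ) +
      ∑ c ∈ Ioi a, Q (t + (a : ℕ) * δ) (t + (c : ℕ) * δ - δ) *
        (P (t + (c : ℕ) * δ - δ) (t + (c : ℕ) * δ - δ + δ) -
          Q (t + (c : ℕ) * δ - δ) (t + (c : ℕ) * δ - δ + δ)) * P (t + (c : ℕ) * δ) (t + N * δ) := by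
  have time_mono : ∀ {a b : ℕ}, a ≤ b → t + a * δ ≤ t + b * δ := fun h => by gcongr
  have telescoped := lindeberg_telescope (p := fun a b => P (t + a * δ) (t + b * δ))
    (q := fun a b => Q (t + a * δ) (t + b * δ))
    (fun a b c hab hbc => hPCK _ _ _ (time_mono hab) (time_mono hbc))
    (fun a b c hab hbc => hQCK _ _ _ (ht.add_nat_mul a) (ht.add_nat_mul b) (ht.add_nat_mul c)
      (time_mono hab) (time_mono hbc))
    (fun a => hPid _) (fun a => hQid _ (ht.add_nat_mul a)) (Fin.is_le a)
  refine telescoped.trans (congrArg _ (sum_Ico_eq_sum_Ioi_fin a fun c _ => ?_))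
  have h₁ : t + ((c + 1 : ℕ) : ℝ) * δ - δ = t + c * δ := by push_cast; ring
  have h₂ : t + c * δ + δ = t + ((c + 1 : ℕ) : ℝ) * δ := by push_cast; ring
  simp only [h₁, h₂]

section GridSequences

variable {i N : ℕ}

/-- For the empty selection this is `0`, the index of `t₀ = t`. -/
def lastIndex (k : Fin i → Fin (N + 1)) : Fin (N + 1) :=
  (Fin.cons 0 k : Fin (i + 1) → Fin (N + 1)) (Fin.last i)

theorem lastIndex_snoc (k : Fin i → Fin (N + 1)) (c : Fin (N + 1)) :
    lastIndex (Fin.snoc k c) = c := by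
  simp [lastIndex]

theorem mem_gridSeq_iff {k : Fin i → Fin (N + 1)} :
    k ∈ gridSeq i N ↔ StrictMono (Fin.cons 0 k : Fin (i + 1) → Fin (N + 1)) := by
  simp [gridSeq, Fin.strictMono_cons, Fin.lt_def, Nat.one_le_iff_ne_zero, Nat.pos_iff_ne_zero,
    and_comm]

theorem snoc_mem_gridSeq_iff {k : Fin i → Fin (N + 1)} {c : Fin (N + 1)} :
    Fin.snoc k c ∈ gridSeq (i + 1) N ↔ k ∈ gridSeq i N ∧ lastIndex k < c := by
  rw [mem_gridSeq_iff, mem_gridSeq_iff, Fin.cons_snoc_eq_snoc_cons, Fin.strictMono_snoc]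
  rfl

theorem sum_gridSeq_succ {M : Type*} [AddCommMonoid M] (f : (Fin (i + 1) → Fin (N + 1)) → M) :
    ∑ k ∈ gridSeq (i + 1) N, f k = ∑ k ∈ gridSeq i N, ∑ c ∈ Ioi (lastIndex k), f (Fin.snoc k c) := by
  rw [sum_sigma']
  symm
  refine sum_nbij' (fun p : (_ : Fin i → Fin (N + 1)) × Fin (N + 1) => Fin.snoc p.1 p.2)
    (fun k : Fin (i + 1) → Fin (N + 1) => ⟨Fin.init k, k (Fin.last i)⟩) ?_ ?_ ?_ ?_ fun _ _ => rfl
  · rintro ⟨k, c⟩ hkc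
    simpa [snoc_mem_gridSeq_iff] using hkc
  · intro k hk
    rw [← Fin.snoc_init_self k, snoc_mem_gridSeq_iff] at hk
    simpa using hk
  · rintro ⟨k, c⟩ -
    simp
  · rintro k -
    exact Fin.snoc_init_self k

theorem seqTimes_eq_add_cons (k : Fin i → Fin (N + 1)) (t δ : ℝ) (j : Fin (i + 1)) :
    seqTimes k t δ j = t + ((Fin.cons 0 k : Fin (i + 1) → Fin (N + 1)) j : ℕ) * δ := by
  cases j using Fin.cases <;> simp [seqTimes]

end GridSequences

section LindebergSums

variable {d : ℕ} (Q : ℝ → ℝ → Op d) (D : ℝ → Op d) (t δ : ℝ) {i N : ℕ}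

def lindWeight (k : Fin i → Fin (N + 1)) : Op d :=
  (List.ofFn fun j : Fin i =>
    Q (seqTimes k t δ j.castSucc) (seqTimes k t δ j.succ - δ) * D (seqTimes k t δ j.succ - δ)).prod

theorem lindSum_eq_sum_lindWeight (tail : ℝ → Op d) :
    lindSum d Q D tail t δ i N =
      ∑ k ∈ gridSeq i N, lindWeight Q D t δ k * tail (t + (lastIndex k : ℕ) * δ) := by
  simp only [lindSum, lindWeight, lastIndex, seqTimes_eq_add_cons]

theorem lindWeight_snoc (k : Fin i → Fin (N + 1)) (c : Fin (N + 1)) :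
    lindWeight Q D t δ (Fin.snoc k c) = lindWeight Q D t δ k *
      (Q (t + (lastIndex k : ℕ) * δ) (t + (c : ℕ) * δ - δ) * D (t + (c : ℕ) * δ - δ)) := by
  simp only [lindWeight, seqTimes_eq_add_cons, lastIndex, Fin.cons_snoc_eq_snoc_cons, List.ofFn_succ',
    List.prod_concat, Fin.succ_castSucc, Fin.snoc_castSucc, Fin.succ_last, Fin.snoc_last]

theorem lindSum_zero (tail : ℝ → Op d) : lindSum d Q D tail t δ 0 N = tail t := by
  have : gridSeq 0 N = univ := eq_univ_of_forall fun k =>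
    mem_gridSeq_iff.mpr (Subsingleton.strictMono (α := Fin 1) _)
  simp [lindSum, this, seqTimes]

theorem lindSum_eq_add_lindSum_succ (tailP tailQ : ℝ → Op d)
    (hstep : ∀ a : Fin (N + 1), tailP (t + (a : ℕ) * δ) = tailQ (t + (a : ℕ) * δ) +
      ∑ c ∈ Ioi a, Q (t + (a : ℕ) * δ) (t + (c : ℕ) * δ - δ) * D (t + (c : ℕ) * δ - δ) *
        tailP (t + (c : ℕ) * δ)) :
    lindSum d Q D tailP t δ i N =
      lindSum d Q D tailQ t δ i N + lindSum d Q D tailP t δ (i + 1) N := by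
  have expand : ∀ k : Fin i → Fin (N + 1),
      lindWeight Q D t δ k * tailP (t + (lastIndex k : ℕ) * δ) =
        lindWeight Q D t δ k * tailQ (t + (lastIndex k : ℕ) * δ) +
          ∑ c ∈ Ioi (lastIndex k), lindWeight Q D t δ (Fin.snoc k c) *
            tailP (t + (lastIndex (Fin.snoc k c) : ℕ) * δ) := by
    intro k
    rw [hstep, mul_add, mul_sum]
    simp only [lindWeight_snoc, lastIndex_snoc, mul_assoc]
  simp only [lindSum_eq_sum_lindWeight, sum_gridSeq_succ, expand, sum_add_distrib]

end LindebergSums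

theorem stmt6_general (d : ℕ) (δ : ℝ) (hδ : 0 < δ) (N : ℕ)
    (S : ℝ) (hS : S = N * δ) (t : ℝ) (ht : inGrid δ t)
    (P Q : ℝ → ℝ → Op d)
    (hPCK : ∀ s u v : ℝ, s ≤ u → u ≤ v → P s u * P u v = P s v)
    (hQCK : ∀ s u v : ℝ, inGrid δ s → inGrid δ u → inGrid δ v →
      s ≤ u → u ≤ v → Q s u * Q u v = Q s v)
    (hPid : ∀ u : ℝ, P u u = 1)
    (hQid : ∀ u : ℝ, inGrid δ u → Q u u = 1) :
    ∀ m : ℕ, 1 ≤ m →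
      P t (t + S) =
        Q t (t + S) +
          (∑ i ∈ Finset.Icc 1 (m - 1),
            lindSum d Q (fun s => P s (s + δ) - Q s (s + δ))
              (fun s => Q s (t + S)) t δ i N) +
          lindSum d Q (fun s => P s (s + δ) - Q s (s + δ))
            (fun s => P s (t + S)) t δ m N := by
  intro m hm
  subst hS
  have hrec := fun i => lindSum_eq_add_lindSum_succ Q (fun s => P s (s + δ) - Q s (s + δ)) t δ
    (fun s => P s (t + N * δ)) (fun s => Q s (t + N * δ)) (i := i)
    (lindeberg_step_grid hδ.le ht hPCK hQCK hPid hQid N)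
  obtain ⟨n, rfl⟩ : ∃ n, m = n + 1 := ⟨m - 1, by omega⟩
  simpa [lindSum_zero] using eq_add_sum_Icc_add_of_eq_add_succ hrec n

/-- Iterated Lindeberg decomposition:
`P_{t,t+S} = Q_{t,t+S} + Σ_{i=1}^{m−1} I_i + R_m`. -/
theorem stmt6 (d : ℕ) (hd : 0 < d) (δ : ℝ) (hδ : 0 < δ) (N : ℕ) (hN : 1 ≤ N)
    (S : ℝ) (hS : S = N * δ) (t : ℝ) (ht : inGrid δ t)
    (P Q : ℝ → ℝ → Op d)
    (hPCK : ∀ s u v : ℝ, s ≤ u → u ≤ v → P s u * P u v = P s v)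
    (hQCK : ∀ s u v : ℝ, inGrid δ s → inGrid δ u → inGrid δ v →
      s ≤ u → u ≤ v → Q s u * Q u v = Q s v)
    (hPid : ∀ u : ℝ, P u u = 1)
    (hQid : ∀ u : ℝ, inGrid δ u → Q u u = 1) :
    ∀ m : ℕ, 1 ≤ m →
      P t (t + S) =
        Q t (t + S) +
          (∑ i ∈ Finset.Icc 1 (m - 1),
            lindSum d Q (fun s => P s (s + δ) - Q s (s + δ))
              (fun s => Q s (t + S)) t δ i N) +
          lindSum d Q (fun s => P s (s + δ) - Q s (s + δ))
            (fun s => P s (t + S)) t δ m N :=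
  stmt6_general d δ hδ N S hS t ht P Q hPCK hQCK hPid hQid
end
end

section
/- Let T > 0, n ∈ ℕ*, α > 0. Suppose that for every l ∈ ℕ the family (Q^{δ_n^l}_{s,t})_{s≤t ∈ π^{δ_n^l}} consists of linear operators on bounded measurable functions satisfying Q^{δ_n^l}_{s,t}𝟙 = 𝟙, where 𝟙 is the constant function 1. Then for every l ∈ ℕ, every ν > 0, and every t ∈ π^{δ_n^l}, the recursively defined operator \hat{Q}^{ν,δ_n^l}_{t,t+δ_n^l} also satisfies \hat{Q}^{ν,δ_n^l}_{t,t+δ_n^l}𝟙 = 𝟙; in particular the associated kernel has total mass 1 (though it need not be positive). -/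
open MeasureTheory

noncomputable section

/-- `m(l,ν) = ⌈ν/((1+α)l+α)⌉`. -/
def mfun (α : ℝ) (l : ℕ) (ν : ℝ) : ℕ := ⌈ν / ((1 + α) * l + α)⌉₊

/-- `q_i(l,ν) = ν + ⌈i − (1+α)(l+1)(i−1)⌉`. -/
def qfun (α : ℝ) (l : ℕ) (ν : ℝ) (i : ℕ) : ℝ :=
  ν + ((⌈(i : ℝ) - (1 + α) * ((l : ℝ) + 1) * ((i : ℝ) - 1)⌉ : ℤ) : ℝ)

/-- Defining recursion of the approximation family `\hat{Q}^{ν,δ_n^l}_{t,t+δ_n^l}`: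
`\hat{Q}^{ν,δ_n^l}_{t,t+δ_n^l} = Q^{δ_n^{l+1}}_{t,t+δ_n^l} + Σ_{i=1}^{m(l,ν)−1} \hat{I}_i`
(when `m(l,ν) = 1` the sum is empty). -/
def QhatRec (d : ℕ) (T α : ℝ) (n : ℕ) (Q : ℕ → ℝ → ℝ → Op d)
    (Qhat : ℝ → ℕ → ℝ → Op d) : Prop :=
  ∀ ν : ℝ, 0 < ν → ∀ l : ℕ, ∀ t : ℝ, inGrid (T / n ^ l) t →
    Qhat ν l t =
      Q (l + 1) t (t + T / n ^ l) +
        ∑ i ∈ Finset.Icc 1 (mfun α l ν - 1),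
          lindSum d (Q (l + 1))
            (fun s => Qhat (qfun α l ν i) (l + 1) s - Q (l + 1) s (s + T / n ^ (l + 1)))
            (fun s => Q (l + 1) s (t + T / n ^ l)) t (T / n ^ (l + 1)) i n

/-- the constant function `𝟙`. -/
def oneFn (d : ℕ) : Fn d := fun _ => 1

lemma inGrid_add_nat {δ t : ℝ} (m : ℕ) (h : inGrid δ t) : inGrid δ (t + m * δ) := by
  obtain ⟨k, rfl⟩ := h
  exact ⟨k + m, by push_cast; ring⟩

lemma inGrid_coarse {T : ℝ} {n : ℕ} (hn : 1 ≤ n) {l : ℕ} {t : ℝ}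
    (h : inGrid (T / n ^ l) t) : inGrid (T / n ^ (l + 1)) t := by
  obtain ⟨k, rfl⟩ := h
  have hn0 : ((n : ℝ)) ≠ 0 := by
    have : (0 : ℝ) < n := by exact_mod_cast hn
    linarith
  have hnl : ((n : ℝ)) ^ l ≠ 0 := pow_ne_zero _ hn0
  refine ⟨k * n, ?_⟩
  rw [pow_succ]
  push_cast
  field_simp

lemma seqTimes_succ' {i N : ℕ} (k : Fin i → Fin (N + 1)) (t δ : ℝ) (j : Fin i) :
    seqTimes k t δ j.succ = t + ((k j : ℕ) : ℝ) * δ := by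
  simp [seqTimes]

lemma measure_lt {α : ℝ} (hα : 0 < α) {l : ℕ} {ν : ℝ} (hν : 0 < ν) {i : ℕ}
    (hi1 : 1 ≤ i) (hi2 : i ≤ mfun α l ν - 1) :
    0 < qfun α l ν i ∧
      ⌈(qfun α l ν i - (1 + α) * ((l : ℝ) + 1)) / α⌉₊ < ⌈(ν - (1 + α) * l) / α⌉₊ := by
  set a : ℝ := (1 + α) * l + α with ha_def
  have ha : 0 < a := by positivity
  have him : i + 1 ≤ mfun α l ν := by omega
  have hiν : (i : ℝ) < ν / a := by
    have h2 : i < mfun α l ν := him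
    rw [mfun] at h2
    exact Nat.lt_ceil.mp h2
  have hiaν : (i : ℝ) * a < ν := (lt_div_iff₀ ha).mp hiν
  have hνa : a < ν := by nlinarith [hiaν, ha, (by exact_mod_cast hi1 : (1 : ℝ) ≤ (i : ℝ))]
  set c : ℤ := ⌈(i : ℝ) - (1 + α) * ((l : ℝ) + 1) * ((i : ℝ) - 1)⌉ with hc_def
  have hc_le : (c : ℝ) ≤ 1 := by
    have : (i : ℝ) - (1 + α) * ((l : ℝ) + 1) * ((i : ℝ) - 1) ≤ 1 := by
      have hi1' : (1 : ℝ) ≤ (i : ℝ) := by exact_mod_cast hi1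
      nlinarith [hα, (Nat.cast_nonneg l : (0:ℝ) ≤ (l:ℝ))]
    calc (c : ℝ) ≤ ((1 : ℤ) : ℝ) := by
          exact_mod_cast Int.ceil_le.mpr (by exact_mod_cast this)
      _ = 1 := by norm_num
  have hc_ge : (i : ℝ) - (1 + α) * ((l : ℝ) + 1) * ((i : ℝ) - 1) ≤ (c : ℝ) := Int.le_ceil _
  have hq_eq : qfun α l ν i = ν + (c : ℝ) := rfl
  have haa : (1 + α) * ((l : ℝ) + 1) = a + 1 := by rw [ha_def]; ring
  have hq_pos : 0 < qfun α l ν i := by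
    rw [hq_eq]
    have hi1' : (1 : ℝ) ≤ (i : ℝ) := by exact_mod_cast hi1
    nlinarith [hc_ge, hiaν, ha]
  refine ⟨hq_pos, ?_⟩
  set x : ℝ := (ν - (1 + α) * l) / α with hx_def
  have hx1 : 1 < x := by
    rw [hx_def, lt_div_iff₀ hα]
    rw [ha_def] at hνa; linarith
  have hq_le : qfun α l ν i ≤ ν + 1 := by rw [hq_eq]; linarith
  have h1 : (qfun α l ν i - (1 + α) * ((l : ℝ) + 1)) / α ≤ x - 1 := by
    rw [hx_def, div_le_iff₀ hα, sub_mul, div_mul_cancel₀ _ (ne_of_gt hα)]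
    nlinarith [hq_le]
  calc ⌈(qfun α l ν i - (1 + α) * ((l : ℝ) + 1)) / α⌉₊
      ≤ ⌈x - 1⌉₊ := Nat.ceil_le_ceil h1
    _ < ⌈x⌉₊ := by
        refine Nat.lt_ceil.mpr ?_
        have h0 : (0 : ℝ) ≤ x - 1 := by linarith
        have := Nat.ceil_lt_add_one h0
        push_cast at this ⊢
        linarith

/-- If each discrete semigroup satisfies `Q^{δ_n^l}_{s,t}𝟙 = 𝟙`, then the
recursively defined operators satisfy `\hat{Q}^{ν,δ_n^l}_{t,t+δ_n^l}𝟙 = 𝟙`. -/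
theorem stmt7 (d : ℕ) (hd : 0 < d) (T : ℝ) (hT : 0 < T) (n : ℕ) (hn : 1 ≤ n)
    (α : ℝ) (hα : 0 < α)
    (Q : ℕ → ℝ → ℝ → Op d)
    (hQCK : ∀ l : ℕ, ∀ s u t : ℝ, inGrid (T / n ^ l) s → inGrid (T / n ^ l) u →
      inGrid (T / n ^ l) t → s ≤ u → u ≤ t → Q l s u * Q l u t = Q l s t)
    (hQone : ∀ l : ℕ, ∀ s t : ℝ, inGrid (T / n ^ l) s → inGrid (T / n ^ l) t → s ≤ t →
      Q l s t (oneFn d) = oneFn d)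
    (Qhat : ℝ → ℕ → ℝ → Op d)
    (hQhat : QhatRec d T α n Q Qhat) :
    ∀ ν : ℝ, 0 < ν → ∀ l : ℕ, ∀ t : ℝ, inGrid (T / n ^ l) t →
      Qhat ν l t (oneFn d) = oneFn d := by
  suffices H : ∀ N : ℕ, ∀ ν : ℝ, 0 < ν → ∀ l : ℕ, ∀ t : ℝ,
      ⌈(ν - (1 + α) * l) / α⌉₊ = N → inGrid (T / n ^ l) t →
      Qhat ν l t (oneFn d) = oneFn d by
    intro ν hν l t ht
    exact H _ ν hν l t rfl ht
  intro N
  induction N using Nat.strong_induction_on with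
  | _ N ih =>
  intro ν hν l t hμ ht
  have hn0 : (0 : ℝ) < (n : ℝ) := by exact_mod_cast hn
  have hδ0 : (0 : ℝ) < T / n ^ l := by positivity
  have hδ1 : (0 : ℝ) < T / n ^ (l + 1) := by positivity
  set δ : ℝ := T / n ^ (l + 1) with hδdef
  have hstep : T / (n : ℝ) ^ l = n * δ := by
    rw [hδdef, pow_succ]
    field_simp
  have ht' : inGrid δ t := inGrid_coarse hn ht
  have htend : inGrid δ (t + T / n ^ l) := by
    rw [hstep]; exact inGrid_add_nat n ht'
  rw [hQhat ν hν l t ht]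
  simp only [LinearMap.add_apply, LinearMap.sum_apply]
  rw [hQone (l + 1) t (t + T / n ^ l) ht' htend (by linarith)]
  have hsum : ∀ i ∈ Finset.Icc 1 (mfun α l ν - 1),
      lindSum d (Q (l + 1))
        (fun s => Qhat (qfun α l ν i) (l + 1) s - Q (l + 1) s (s + T / n ^ (l + 1)))
        (fun s => Q (l + 1) s (t + T / n ^ l)) t (T / n ^ (l + 1)) i n (oneFn d) = 0 := by
    intro i hi
    rw [Finset.mem_Icc] at hi
    obtain ⟨hq0, hlt⟩ := measure_lt hα hν hi.1 hi.2
    rw [hμ] at hlt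
    have IH' : ∀ s : ℝ, inGrid δ s → Qhat (qfun α l ν i) (l + 1) s (oneFn d) = oneFn d := by
      intro s hs
      refine ih _ hlt _ hq0 (l + 1) s ?_ hs
      push_cast
      ring_nf
    obtain ⟨i', rfl⟩ : ∃ i', i = i' + 1 := ⟨i - 1, by omega⟩
    rw [lindSum]
    simp only [LinearMap.sum_apply]
    refine Finset.sum_eq_zero fun k hk => ?_
    simp only [gridSeq, Finset.mem_filter, Finset.mem_univ, true_and] at hk
    obtain ⟨-, hk1⟩ := hk
    rw [Module.End.mul_apply]
    -- evaluate the tail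
    have hlastval : seqTimes k t (T / n ^ (l + 1)) (Fin.last (i' + 1)) =
        t + ((k (Fin.last i') : ℕ) : ℝ) * δ := by
      rw [← Fin.succ_last]
      exact seqTimes_succ' k t _ _
    have hkle : ((k (Fin.last i') : ℕ) : ℝ) ≤ (n : ℝ) := by
      exact_mod_cast Fin.is_le (k (Fin.last i'))
    have htailgrid : inGrid δ (t + ((k (Fin.last i') : ℕ) : ℝ) * δ) :=
      inGrid_add_nat _ ht'
    have htail : Q (l + 1) (seqTimes k t (T / n ^ (l + 1)) (Fin.last (i' + 1)))
        (t + T / n ^ l) (oneFn d) = oneFn d := by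
      rw [hlastval]
      refine hQone (l + 1) _ _ htailgrid htend ?_
      rw [hstep]
      nlinarith [hδ1, hkle]
    rw [htail]
    -- now the product applied to 𝟙 is 0
    rw [List.ofFn_succ', List.prod_concat, Module.End.mul_apply]
    have hs'' : seqTimes k t (T / n ^ (l + 1)) (Fin.last i').succ - T / n ^ (l + 1) =
        t + (((k (Fin.last i') : ℕ) - 1 : ℕ) : ℝ) * δ := by
      rw [seqTimes_succ']
      have h1 : 1 ≤ (k (Fin.last i') : ℕ) := hk1 _
      rw [Nat.cast_sub h1]
      push_cast
      ring
    have hgrid'' : inGrid δ (seqTimes k t (T / n ^ (l + 1)) (Fin.last i').succ -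
        T / n ^ (l + 1)) := by
      rw [hs'']; exact inGrid_add_nat _ ht'
    have hgrid''δ : inGrid δ (seqTimes k t (T / n ^ (l + 1)) (Fin.last i').succ -
        T / n ^ (l + 1) + T / n ^ (l + 1)) := by
      rw [sub_add_cancel, seqTimes_succ']
      exact inGrid_add_nat _ ht'
    have hD : (Qhat (qfun α l ν (i' + 1)) (l + 1)
          (seqTimes k t (T / n ^ (l + 1)) (Fin.last i').succ - T / n ^ (l + 1)) -
        Q (l + 1) (seqTimes k t (T / n ^ (l + 1)) (Fin.last i').succ - T / n ^ (l + 1))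
          (seqTimes k t (T / n ^ (l + 1)) (Fin.last i').succ - T / n ^ (l + 1) +
            T / n ^ (l + 1))) (oneFn d) = 0 := by
      rw [LinearMap.sub_apply, IH' _ hgrid'',
        hQone (l + 1) _ _ hgrid'' hgrid''δ (by linarith), sub_self]
    rw [Module.End.mul_apply, hD, map_zero, map_zero]
  rw [Finset.sum_congr rfl hsum]
  simp
end
end
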